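/- arXiv:1207.0975 — 3 statements merged into one kernel-verified Lean document; each statement's English description precedes it below -/
import Mathlib

section
/- Let Γ be a finitely generated group such that finite-dimensional unitary representations of Γ separate points (i.e., for every g ≠ e there is a finite-dimensional unitary representation π with π(g) ≠ 1). Then Γ is residually finite. -/
/-!
Mal'cev's argument. The entries of `π t` and `π t⁻¹`, for `t` in a finite generating set of `Γ`,
generate a finitely generated `ℤ`-subalgebra `A ⊆ ℂ`, and `π` takes values in `GL_k(A)`. Since `A`
is a reduced Jacobson ring whose residue fields are finite (Zariski's lemma over `ℤ`), a nonzero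
entry of `π g - 1` survives modulo some maximal ideal `m`, and the kernel of `Γ → GL_k(A/m)` is a
normal subgroup of finite index avoiding `g`.
-/

instance Int.isJacobsonRing : IsJacobsonRing ℤ := by
  refine isJacobsonRing_iff_prime_eq.mpr fun {P} hP => ?_
  by_cases hbot : P = ⊥
  · subst hbot
    refine le_antisymm (fun x hx => ?_) Ideal.le_jacobson
    have hplus := Int.isUnit_iff.mp (Ideal.mem_jacobson_bot.mp hx 1)
    have hminus := Int.isUnit_iff.mp (Ideal.mem_jacobson_bot.mp hx (-1))
    rw [Ideal.mem_bot]
    omega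
  · have := IsPrime.to_maximal_ideal hbot
    exact Ideal.jacobson_eq_self_of_isMaximal

theorem finite_of_field_of_moduleFinite_int (F : Type*) [Field F] [Module.Finite ℤ F] :
    Finite F := by
  rcases CharP.char_is_prime_or_zero F (ringChar F) with hp | h0
  · have : Fact (ringChar F).Prime := ⟨hp⟩
    let : Algebra (ZMod (ringChar F)) F := ZMod.algebra F (ringChar F)
    have : Module.Finite (ZMod (ringChar F)) F :=
      Module.Finite.of_restrictScalars_finite ℤ (ZMod (ringChar F)) F
    exact Module.finite_of_finite (ZMod (ringChar F))
  · -- In characteristic zero, `ℤ ⊆ F` would be an integral extension of a non-field by a field.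
    have : CharP F 0 := h0 ▸ ringChar.charP F
    have : CharZero F := CharP.charP_to_charZero F
    exact absurd ((Algebra.IsIntegral.isField_iff_isField Int.cast_injective).mpr
      (Field.toIsField F)) Int.not_isField

theorem Ideal.finite_quotient_of_finiteType_int {R : Type*} [CommRing R]
    [Algebra.FiniteType ℤ R] (m : Ideal R) [m.IsMaximal] : Finite (R ⧸ m) := by
  let : Field (R ⧸ m) := Ideal.Quotient.field m
  have : Algebra.FiniteType ℤ (R ⧸ m) :=
    .of_surjective (Ideal.Quotient.mkₐ ℤ m) (Ideal.Quotient.mkₐ_surjective ℤ m)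
  have := finite_of_finite_type_of_isJacobsonRing ℤ (R ⧸ m)
  exact finite_of_field_of_moduleFinite_int (R ⧸ m)

theorem exists_isMaximal_finite_quotient_notMem {R : Type*} [CommRing R] [IsReduced R]
    [Algebra.FiniteType ℤ R] {d : R} (hd : d ≠ 0) :
    ∃ m : Ideal R, m.IsMaximal ∧ Finite (R ⧸ m) ∧ d ∉ m := by
  have : IsJacobsonRing R := isJacobsonRing_of_finiteType (A := ℤ)
  have hjac : (⊥ : Ideal R).jacobson = ⊥ := by
    rw [← Ideal.radical_eq_jacobson]
    exact nilradical_eq_zero R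
  have hdj : d ∉ (⊥ : Ideal R).jacobson := by rwa [hjac, Ideal.mem_bot]
  simp only [Ideal.jacobson, Ideal.mem_sInf, not_forall] at hdj
  obtain ⟨m, ⟨-, hm⟩, hdm⟩ := hdj
  exact ⟨m, hm, m.finite_quotient_of_finiteType_int, hdm⟩

theorem exists_normal_finiteIndex_notMem_of_GL_of_finiteType_int {Γ : Type*} [Group Γ]
    {R : Type*} [CommRing R] [IsReduced R] [Algebra.FiniteType ℤ R]
    {n : Type*} [Fintype n] [DecidableEq n] (ρ : Γ →* GL n R) {g : Γ} (hg : ρ g ≠ 1) :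
    ∃ N : Subgroup Γ, N.Normal ∧ N.FiniteIndex ∧ g ∉ N := by
  obtain ⟨i, j, hij⟩ : ∃ i j, ρ g i j ≠ (1 : Matrix n n R) i j := by
    by_contra! h
    exact hg (Units.ext (Matrix.ext h))
  obtain ⟨m, -, hfin, hm⟩ := exists_isMaximal_finite_quotient_notMem (sub_ne_zero.mpr hij)
  let φ := (Matrix.GeneralLinearGroup.map (Ideal.Quotient.mk m)).comp ρ
  refine ⟨φ.ker, inferInstance, Subgroup.finiteIndex_ker φ, fun hgN => hm ?_⟩
  have hentry := congrArg (fun u : GL n (R ⧸ m) => u i j) (φ.mem_ker.mp hgN)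
  simp only [φ, MonoidHom.comp_apply, Matrix.GeneralLinearGroup.map_apply,
    Matrix.GeneralLinearGroup.coe_one] at hentry
  have hone : (1 : Matrix n n (R ⧸ m)) i j = Ideal.Quotient.mk m ((1 : Matrix n n R) i j) :=
    congrFun (congrFun (map_one (Ideal.Quotient.mk m).mapMatrix).symm i) j
  exact Ideal.Quotient.eq.mp (hentry.trans hone)

theorem Matrix.GeneralLinearGroup.mem_range_map_algebraMap {n : Type*} [Fintype n] [DecidableEq n]
    {R K : Type*} [CommRing R] [CommRing K] [Algebra R K] (A : Subalgebra R K) {u : GL n K}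
    (hu : ∀ i j, u i j ∈ A) (hu' : ∀ i j, u⁻¹ i j ∈ A) :
    u ∈ (map (algebraMap A K)).range := by
  have hinj : Function.Injective ((algebraMap A K).mapMatrix : Matrix n n A → Matrix n n K) :=
    Matrix.map_injective Subtype.val_injective
  let lift (M : Matrix n n K) (hM : ∀ i j, M i j ∈ A) : Matrix n n A :=
    Matrix.of fun i j => ⟨M i j, hM i j⟩
  have hlift (M : Matrix n n K) (hM) : (algebraMap A K).mapMatrix (lift M hM) = M := rfl
  refine ⟨⟨lift _ hu, lift _ hu', hinj ?_, hinj ?_⟩, Units.ext (hlift _ hu)⟩ <;>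
    simp only [map_mul, map_one, hlift, Units.mul_inv, Units.inv_mul]

theorem exists_finiteType_subalgebra_lift_GL {Γ : Type*} [Group Γ] (hfg : Group.FG Γ)
    {K : Type*} [CommRing K] {n : Type*} [Fintype n] [DecidableEq n] (ρ : Γ →* GL n K) :
    ∃ (A : Subalgebra ℤ K) (_ : Algebra.FiniteType ℤ A) (ρ' : Γ →* GL n A),
      (Matrix.GeneralLinearGroup.map (algebraMap A K)).comp ρ' = ρ := by
  obtain ⟨T, hT, hTfin⟩ := Group.fg_iff.mp hfg
  let S := ⋃ t ∈ T ∪ T⁻¹, Set.range fun p : n × n => ρ t p.1 p.2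
  have hSfin : S.Finite := (hTfin.union hTfin.inv).biUnion fun _ _ => Set.finite_range _
  let A := Algebra.adjoin ℤ S
  have hentry {t : Γ} (ht : t ∈ T ∪ T⁻¹) (i j : n) : ρ t i j ∈ A :=
    Algebra.subset_adjoin (Set.mem_biUnion ht ⟨(i, j), rfl⟩)
  let ι := Matrix.GeneralLinearGroup.map (n := n) (algebraMap A K)
  have hgen : T ⊆ ι.range.comap ρ := fun t ht =>
    Matrix.GeneralLinearGroup.mem_range_map_algebraMap A (hentry (Or.inl ht))
      (by simpa only [map_inv] using hentry (Or.inr (Set.inv_mem_inv.mpr ht)))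
  have hrange (γ : Γ) : ρ γ ∈ ι.range :=
    (Subgroup.closure_le _).mpr hgen (hT ▸ Subgroup.mem_top γ)
  have hinj : Function.Injective ι :=
    Units.map_injective (Matrix.map_injective Subtype.val_injective)
  refine ⟨A, .adjoin_of_finite hSfin,
    (MonoidHom.ofInjective hinj).symm.toMonoidHom.comp (ρ.codRestrict _ hrange), ?_⟩
  ext1 γ
  exact MonoidHom.apply_ofInjective_symm hinj ⟨ρ γ, hrange γ⟩

theorem exists_normal_finiteIndex_notMem_of_GL {Γ : Type*} [Group Γ] (hfg : Group.FG Γ)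
    {K : Type*} [CommRing K] [IsReduced K] {n : Type*} [Fintype n] [DecidableEq n]
    (ρ : Γ →* GL n K) {g : Γ} (hg : ρ g ≠ 1) :
    ∃ N : Subgroup Γ, N.Normal ∧ N.FiniteIndex ∧ g ∉ N := by
  obtain ⟨A, _, ρ', rfl⟩ := exists_finiteType_subalgebra_lift_GL hfg ρ
  have : IsReduced A := isReduced_of_injective (algebraMap A K) Subtype.val_injective
  exact exists_normal_finiteIndex_notMem_of_GL_of_finiteType_int ρ'
    fun h => hg (by rw [MonoidHom.comp_apply, h, map_one])

theorem residually_finite_of_finDimReps_separate {Γ : Type} [Group Γ]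
    (hfg : Group.FG Γ)
    (hsep : ∀ g : Γ, g ≠ 1 →
      ∃ (k : ℕ) (π : Γ →* Matrix.unitaryGroup (Fin k) ℂ), π g ≠ 1) :
    ∀ g : Γ, g ≠ 1 →
      ∃ N : Subgroup Γ, N.Normal ∧ N.FiniteIndex ∧ g ∉ N := by
  intro g hg
  obtain ⟨k, π, hπ⟩ := hsep g hg
  exact exists_normal_finiteIndex_notMem_of_GL hfg (Unitary.toUnits.comp π)
    fun h => hπ (Unitary.toUnits_injective (by rw [← MonoidHom.comp_apply, h, map_one]))
end

section
/- Let Γ be a discrete group and suppose that ‖a‖_u = ‖a‖_f for all a in the real group ring ℝ[Γ], where ‖·‖_f denotes the norm coming from the direct sum of all finite-dimensional unitary representations. Then ‖a‖_u = ‖a‖_f for all a ∈ ℂ[Γ]. -/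
/-!
Conjugating coefficients, `a ↦ ā`, does not increase `‖·‖_f`: for a finite-dimensional `π`,
`π̄(ā)` is `π(a)` acting on the conjugate Hilbert space, which is again finite-dimensional.
Hence the real elements `Re a = (a + ā)/2` and `Im a = (a - ā)/2i` satisfy
`‖a‖_u ≤ ‖Re a‖_u + ‖Im a‖_u = ‖Re a‖_f + ‖Im a‖_f ≤ 2‖a‖_f`.
Both norms satisfy the C*-identity, so applying this bound to `(a⋆a)^(2^n)` gives
`‖a‖_u^(2^(n+1)) ≤ 2‖a‖_f^(2^(n+1))`, and taking `2^(n+1)`-th roots as `n → ∞`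
gives `‖a‖_u ≤ ‖a‖_f`.
-/

open scoped ENNReal

/-- A unitary representation of a group `G` on a complex Hilbert space. -/
structure UnitaryRep (G : Type) [Group G] : Type 1 where
  H : Type
  [nacg : NormedAddCommGroup H]
  [ips : InnerProductSpace ℂ H]
  [cs : CompleteSpace H]
  π : G →* (H →L[ℂ] H)
  unitary : ∀ g, π g ∈ unitary (H →L[ℂ] H)

attribute [instance] UnitaryRep.nacg UnitaryRep.ips UnitaryRep.cs

/-- The induced algebra homomorphism `ℂ[G] → B(H)` of a unitary representation. -/
noncomputable def UnitaryRep.lift {G : Type} [Group G] (r : UnitaryRep G) :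
    MonoidAlgebra ℂ G →ₐ[ℂ] (r.H →L[ℂ] r.H) :=
  MonoidAlgebra.lift ℂ (r.H →L[ℂ] r.H) G r.π

/-- The universal C*-norm on the group algebra `ℂ[G]`:
the supremum of `‖π(a)‖` over all unitary representations `π`. -/
noncomputable def univNorm {G : Type} [Group G] (a : MonoidAlgebra ℂ G) : ℝ :=
  sSup { x | ∃ r : UnitaryRep G, x = ‖r.lift a‖ }

/-- The norm coming from the direct sum of all finite-dimensional unitary
representations: the supremum of `‖π(a)‖` over all finite-dimensional `π`. -/
noncomputable def finNorm {G : Type} [Group G] (a : MonoidAlgebra ℂ G) : ℝ :=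
  sSup { x | ∃ r : UnitaryRep G, FiniteDimensional ℂ r.H ∧ x = ‖r.lift a‖ }

open ComplexConjugate

noncomputable section

def ConjSpace (H : Type*) : Type _ := H

namespace ConjSpace

variable {H : Type*} [NormedAddCommGroup H]

instance : NormedAddCommGroup (ConjSpace H) := inferInstanceAs (NormedAddCommGroup H)

instance [CompleteSpace H] : CompleteSpace (ConjSpace H) := inferInstanceAs (CompleteSpace H)

variable [InnerProductSpace ℂ H]

instance : Module ℂ (ConjSpace H) := Module.compHom H (starRingEnd ℂ)

instance : NormedSpace ℂ (ConjSpace H) where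
  norm_smul_le z (v : H) := by
    change ‖conj z • v‖ ≤ ‖z‖ * ‖v‖
    rw [norm_smul, Complex.norm_conj]

instance : Inner ℂ (ConjSpace H) := ⟨fun (x y : H) => inner ℂ y x⟩

instance : InnerProductSpace ℂ (ConjSpace H) where
  norm_sq_eq_re_inner (x : H) := (inner_self_eq_norm_sq (𝕜 := ℂ) x).symm
  conj_inner_symm (x y : H) := inner_conj_symm (𝕜 := ℂ) y x
  add_left (x y z : H) := inner_add_right (𝕜 := ℂ) z x y
  smul_left (x y : H) z := inner_smul_right (𝕜 := ℂ) y x (conj z)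

instance [FiniteDimensional ℂ H] : FiniteDimensional ℂ (ConjSpace H) :=
  have : LocallyCompactSpace (ConjSpace H) := inferInstanceAs (LocallyCompactSpace H)
  .of_locallyCompactSpace ℂ

end ConjSpace

section conjCLM

variable {H : Type*} [NormedAddCommGroup H] [InnerProductSpace ℂ H]

def conjCLM : (H →L[ℂ] H) →+* (ConjSpace H →L[ℂ] ConjSpace H) where
  toFun T :=
    { toFun := fun v : H => T v
      map_add' := T.map_add
      map_smul' := fun z v => T.map_smul (conj z) v
      cont := T.cont }
  map_one' := rfl
  map_mul' _ _ := rfl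
  map_zero' := rfl
  map_add' _ _ := rfl

lemma conjCLM_smul (z : ℂ) (T : H →L[ℂ] H) : conjCLM (z • T) = conj z • conjCLM T := by
  ext v
  change z • T v = conj (conj z) • T v
  rw [Complex.conj_conj]

lemma norm_conjCLM (T : H →L[ℂ] H) : ‖conjCLM T‖ = ‖T‖ :=
  le_antisymm (ContinuousLinearMap.opNorm_le_bound _ (norm_nonneg T) fun v : H => T.le_opNorm v)
    (ContinuousLinearMap.opNorm_le_bound _ (norm_nonneg _) fun v => (conjCLM T).le_opNorm v)

lemma conjCLM_star [CompleteSpace H] (T : H →L[ℂ] H) : conjCLM (star T) = star (conjCLM T) := by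
  rw [ContinuousLinearMap.star_eq_adjoint, ContinuousLinearMap.star_eq_adjoint,
    ContinuousLinearMap.eq_adjoint_iff]
  intro (x : H) (y : H)
  exact ContinuousLinearMap.adjoint_inner_right T y x

lemma conjCLM_mem_unitary [CompleteSpace H] {U : H →L[ℂ] H} (hU : U ∈ unitary (H →L[ℂ] H)) :
    conjCLM U ∈ unitary (ConjSpace H →L[ℂ] ConjSpace H) := by
  obtain ⟨h₁, h₂⟩ := Unitary.mem_iff.mp hU
  exact Unitary.mem_iff.mpr ⟨by rw [← conjCLM_star, ← map_mul, h₁, map_one],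
    by rw [← conjCLM_star, ← map_mul, h₂, map_one]⟩

end conjCLM

namespace MonoidAlgebra

variable {G : Type*} [Group G]

def conjCoeff (a : MonoidAlgebra ℂ G) : MonoidAlgebra ℂ G := mapRingHom G (starRingEnd ℂ) a

@[simp] lemma coeff_conjCoeff (a : MonoidAlgebra ℂ G) (g : G) :
    (conjCoeff a).coeff g = conj (a.coeff g) :=
  coeff_mapRingHom _ _ _

@[simp] lemma conjCoeff_conjCoeff (a : MonoidAlgebra ℂ G) : conjCoeff (conjCoeff a) = a := by
  ext; simp

lemma conjCoeff_single (g : G) (z : ℂ) : conjCoeff (single g z) = single g (conj z) :=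
  mapRingHom_single _ _ _

def rePart (a : MonoidAlgebra ℂ G) : MonoidAlgebra ℂ G := (2⁻¹ : ℂ) • a + (2⁻¹ : ℂ) • conjCoeff a

def imPart (a : MonoidAlgebra ℂ G) : MonoidAlgebra ℂ G :=
  (-(Complex.I / 2)) • a + (Complex.I / 2) • conjCoeff a

lemma im_coeff_rePart (a : MonoidAlgebra ℂ G) (g : G) : ((rePart a).coeff g).im = 0 := by
  simp [rePart]

lemma im_coeff_imPart (a : MonoidAlgebra ℂ G) (g : G) : ((imPart a).coeff g).im = 0 := by
  simp [imPart]

lemma rePart_add_I_smul_imPart (a : MonoidAlgebra ℂ G) : rePart a + Complex.I • imPart a = a := by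
  ext g
  simp only [rePart, imPart, coeff_add, coeff_smul, Finsupp.coe_add, Finsupp.coe_smul,
    Pi.add_apply, Pi.smul_apply, smul_eq_mul, coeff_conjCoeff]
  linear_combination (conj (a.coeff g) - a.coeff g) / 2 * Complex.I_sq

def groupStar (a : MonoidAlgebra ℂ G) : MonoidAlgebra ℂ G := conjCoeff (mapDomain (·⁻¹) a)

end MonoidAlgebra

open MonoidAlgebra

namespace UnitaryRep

variable {G : Type} [Group G] (r : UnitaryRep G)

lemma star_π (g : G) : star (r.π g) = r.π g⁻¹ :=
  left_inv_eq_right_inv (Unitary.star_mul_self_of_mem (r.unitary g))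
    (by rw [← map_mul, mul_inv_cancel, map_one])

lemma norm_π_le_one (g : G) : ‖r.π g‖ ≤ 1 :=
  calc ‖r.π g‖ = ‖r.π g * 1‖ := by rw [mul_one]
    _ = ‖(1 : r.H →L[ℂ] r.H)‖ := CStarRing.norm_mem_unitary_mul 1 (r.unitary g)
    _ ≤ 1 := ContinuousLinearMap.norm_id_le

lemma lift_single (g : G) (z : ℂ) : r.lift (single g z) = z • r.π g :=
  MonoidAlgebra.lift_single _ _ _

lemma norm_lift_le (a : MonoidAlgebra ℂ G) : ‖r.lift a‖ ≤ a.coeff.sum fun _ z => ‖z‖ := by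
  rw [UnitaryRep.lift, MonoidAlgebra.lift_apply]
  refine (norm_sum_le _ _).trans (Finset.sum_le_sum fun g _ => ?_)
  rw [norm_smul]
  exact mul_le_of_le_one_right (norm_nonneg _) (r.norm_π_le_one g)

lemma lift_groupStar (a : MonoidAlgebra ℂ G) : r.lift (groupStar a) = star (r.lift a) := by
  induction a using MonoidAlgebra.induction_linear with
  | zero => simp [groupStar, conjCoeff]
  | add x y hx hy => simp_all [groupStar, conjCoeff, mapDomain_add]
  | single g z =>
    rw [groupStar, mapDomain_single, conjCoeff_single, lift_single, lift_single, star_smul,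
      star_π, starRingEnd_apply]

lemma norm_lift_groupStar_mul_pow_two_pow (a : MonoidAlgebra ℂ G) (n : ℕ) :
    ‖r.lift ((groupStar a * a) ^ 2 ^ n)‖ = (‖r.lift a‖ ^ 2) ^ 2 ^ n := by
  rw [map_pow, map_mul, lift_groupStar, (IsSelfAdjoint.star_mul_self _).norm_pow_two_pow,
    CStarRing.norm_star_mul_self, sq]

def conjugate : UnitaryRep G where
  H := ConjSpace r.H
  π := conjCLM.toMonoidHom.comp r.π
  unitary g := conjCLM_mem_unitary (r.unitary g)

instance [FiniteDimensional ℂ r.H] : FiniteDimensional ℂ r.conjugate.H :=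
  inferInstanceAs (FiniteDimensional ℂ (ConjSpace r.H))

lemma conjugate_lift_conjCoeff (a : MonoidAlgebra ℂ G) :
    r.conjugate.lift (conjCoeff a) = conjCLM (r.lift a) := by
  change MonoidAlgebra.lift ℂ (ConjSpace r.H →L[ℂ] ConjSpace r.H) G
    (conjCLM.toMonoidHom.comp r.π) (conjCoeff a) = _
  induction a using MonoidAlgebra.induction_linear with
  | zero => simp [conjCoeff]
  | add x y hx hy => simp_all [conjCoeff]
  | single g z => simp [conjCoeff_single, MonoidAlgebra.lift_single, r.lift_single, conjCLM_smul]

end UnitaryRep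

lemma le_of_forall_pow_two_pow_le_mul {A B C : ℝ} (hA : 0 ≤ A) (hB : 0 ≤ B)
    (h : ∀ n : ℕ, A ^ 2 ^ n ≤ C * B ^ 2 ^ n) : A ≤ B := by
  by_contra! hBA
  have hA₀ : 0 < A := hB.trans_lt hBA
  have hlim : Filter.Tendsto (fun n : ℕ => C * (B / A) ^ 2 ^ n) Filter.atTop (nhds 0) := by
    simpa using ((tendsto_pow_atTop_nhds_zero_of_lt_one (div_nonneg hB hA)
      ((div_lt_one hA₀).2 hBA)).comp (tendsto_pow_atTop_atTop_of_one_lt one_lt_two)).const_mul C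
  obtain ⟨n, hn⟩ := (hlim.eventually (gt_mem_nhds one_pos)).exists
  rw [div_pow, ← mul_div_assoc, div_lt_one (pow_pos hA₀ _)] at hn
  exact (h n).not_gt hn

section repNorm

variable {G : Type} [Group G]

def repNorm (P : UnitaryRep G → Prop) (a : MonoidAlgebra ℂ G) : ℝ :=
  sSup {x | ∃ r : UnitaryRep G, P r ∧ x = ‖r.lift a‖}

lemma univNorm_eq_repNorm (a : MonoidAlgebra ℂ G) : univNorm a = repNorm (fun _ => True) a := by
  simp [univNorm, repNorm]

lemma finNorm_eq_repNorm (a : MonoidAlgebra ℂ G) :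
    finNorm a = repNorm (fun r => FiniteDimensional ℂ r.H) a :=
  rfl

variable {P Q : UnitaryRep G → Prop}

lemma repNorm_nonneg (a : MonoidAlgebra ℂ G) : 0 ≤ repNorm P a :=
  Real.sSup_nonneg <| by rintro _ ⟨r, -, rfl⟩; exact norm_nonneg _

lemma norm_lift_le_repNorm {r : UnitaryRep G} (hr : P r) (a : MonoidAlgebra ℂ G) :
    ‖r.lift a‖ ≤ repNorm P a :=
  le_csSup ⟨_, by rintro _ ⟨r, -, rfl⟩; exact r.norm_lift_le a⟩ ⟨r, hr, rfl⟩

lemma repNorm_le {a : MonoidAlgebra ℂ G} {c : ℝ} (hc : 0 ≤ c)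
    (h : ∀ r, P r → ‖r.lift a‖ ≤ c) : repNorm P a ≤ c :=
  Real.sSup_le (by rintro _ ⟨r, hr, rfl⟩; exact h r hr) hc

lemma repNorm_mono (hPQ : ∀ r, P r → Q r) (a : MonoidAlgebra ℂ G) :
    repNorm P a ≤ repNorm Q a :=
  repNorm_le (repNorm_nonneg a) fun _ hr => norm_lift_le_repNorm (hPQ _ hr) a

lemma repNorm_add_le (a b : MonoidAlgebra ℂ G) :
    repNorm P (a + b) ≤ repNorm P a + repNorm P b :=
  repNorm_le (add_nonneg (repNorm_nonneg a) (repNorm_nonneg b)) fun r hr => by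
    rw [map_add]
    exact (norm_add_le _ _).trans
      (add_le_add (norm_lift_le_repNorm hr a) (norm_lift_le_repNorm hr b))

lemma repNorm_smul_le (z : ℂ) (a : MonoidAlgebra ℂ G) :
    repNorm P (z • a) ≤ ‖z‖ * repNorm P a :=
  repNorm_le (mul_nonneg (norm_nonneg z) (repNorm_nonneg a)) fun r hr => by
    rw [map_smul, norm_smul]
    exact mul_le_mul_of_nonneg_left (norm_lift_le_repNorm hr a) (norm_nonneg z)

lemma repNorm_conjCoeff_le (hP : ∀ r, P r → P r.conjugate) (a : MonoidAlgebra ℂ G) :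
    repNorm P (conjCoeff a) ≤ repNorm P a :=
  repNorm_le (repNorm_nonneg a) fun r hr => by
    rw [← norm_conjCLM, ← r.conjugate_lift_conjCoeff, conjCoeff_conjCoeff]
    exact norm_lift_le_repNorm (hP r hr) a

lemma repNorm_smul_add_smul_conjCoeff_le (hP : ∀ r, P r → P r.conjugate) (z w : ℂ)
    (a : MonoidAlgebra ℂ G) :
    repNorm P (z • a + w • conjCoeff a) ≤ (‖z‖ + ‖w‖) * repNorm P a :=
  calc repNorm P (z • a + w • conjCoeff a)
      ≤ ‖z‖ * repNorm P a + ‖w‖ * repNorm P (conjCoeff a) :=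
        (repNorm_add_le _ _).trans (add_le_add (repNorm_smul_le z a) (repNorm_smul_le w _))
    _ ≤ (‖z‖ + ‖w‖) * repNorm P a := by
        rw [add_mul]; gcongr; exact repNorm_conjCoeff_le hP a

lemma repNorm_rePart_le (hP : ∀ r, P r → P r.conjugate) (a : MonoidAlgebra ℂ G) :
    repNorm P (rePart a) ≤ repNorm P a := by
  refine (repNorm_smul_add_smul_conjCoeff_le hP 2⁻¹ 2⁻¹ a).trans_eq ?_
  norm_num

lemma repNorm_imPart_le (hP : ∀ r, P r → P r.conjugate) (a : MonoidAlgebra ℂ G) :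
    repNorm P (imPart a) ≤ repNorm P a := by
  refine (repNorm_smul_add_smul_conjCoeff_le hP (-(Complex.I / 2)) (Complex.I / 2) a).trans_eq ?_
  norm_num

lemma repNorm_groupStar_mul_pow_two_pow_le (a : MonoidAlgebra ℂ G) (n : ℕ) :
    repNorm P ((groupStar a * a) ^ 2 ^ n) ≤ (repNorm P a ^ 2) ^ 2 ^ n :=
  repNorm_le (by positivity) fun r hr => by
    rw [r.norm_lift_groupStar_mul_pow_two_pow]
    gcongr
    exact norm_lift_le_repNorm hr a

lemma repNorm_le_two_mul_of_eq_on_real (hP : ∀ r, P r → P r.conjugate)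
    (hreal : ∀ a : MonoidAlgebra ℂ G, (∀ g, (a.coeff g).im = 0) → repNorm Q a = repNorm P a)
    (a : MonoidAlgebra ℂ G) : repNorm Q a ≤ 2 * repNorm P a :=
  calc repNorm Q a = repNorm Q (rePart a + Complex.I • imPart a) := by
        rw [rePart_add_I_smul_imPart]
    _ ≤ repNorm Q (rePart a) + ‖Complex.I‖ * repNorm Q (imPart a) :=
        (repNorm_add_le _ _).trans (add_le_add le_rfl (repNorm_smul_le Complex.I (imPart a)))
    _ = repNorm P (rePart a) + repNorm P (imPart a) := by
        rw [Complex.norm_I, one_mul, hreal _ (im_coeff_rePart a), hreal _ (im_coeff_imPart a)]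
    _ ≤ repNorm P a + repNorm P a := add_le_add (repNorm_rePart_le hP a) (repNorm_imPart_le hP a)
    _ = 2 * repNorm P a := (two_mul _).symm

lemma repNorm_le_of_le_mul {C : ℝ} (h : ∀ a, repNorm P a ≤ C * repNorm Q a)
    (a : MonoidAlgebra ℂ G) : repNorm P a ≤ repNorm Q a := by
  have h' (b : MonoidAlgebra ℂ G) : repNorm P b ≤ max C 0 * repNorm Q b :=
    (h b).trans (mul_le_mul_of_nonneg_right (le_max_left C 0) (repNorm_nonneg b))
  refine repNorm_le (repNorm_nonneg a) fun r hr => ?_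
  have key : ‖r.lift a‖ ^ 2 ≤ repNorm Q a ^ 2 := by
    refine le_of_forall_pow_two_pow_le_mul (C := max C 0) (by positivity) (by positivity) fun n => ?_
    calc (‖r.lift a‖ ^ 2) ^ 2 ^ n = ‖r.lift ((groupStar a * a) ^ 2 ^ n)‖ :=
          (r.norm_lift_groupStar_mul_pow_two_pow a n).symm
      _ ≤ repNorm P ((groupStar a * a) ^ 2 ^ n) := norm_lift_le_repNorm hr _
      _ ≤ max C 0 * repNorm Q ((groupStar a * a) ^ 2 ^ n) := h' _
      _ ≤ max C 0 * (repNorm Q a ^ 2) ^ 2 ^ n := by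
          gcongr
          exact repNorm_groupStar_mul_pow_two_pow_le a n
  exact (pow_le_pow_iff_left₀ (norm_nonneg _) (repNorm_nonneg a) two_ne_zero).1 key

end repNorm

end

theorem univNorm_eq_finNorm_of_real_case {G : Type} [Group G]
    (hreal : ∀ a : MonoidAlgebra ℂ G, (∀ g : G, (a.coeff g).im = 0) → univNorm a = finNorm a) :
    ∀ a : MonoidAlgebra ℂ G, univNorm a = finNorm a := by
  simp only [univNorm_eq_repNorm, finNorm_eq_repNorm] at hreal ⊢
  have hconj (r : UnitaryRep G) (_ : FiniteDimensional ℂ r.H) :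
      FiniteDimensional ℂ r.conjugate.H := inferInstance
  intro a
  exact le_antisymm (repNorm_le_of_le_mul (repNorm_le_two_mul_of_eq_on_real hconj hreal) a)
    (repNorm_mono (fun _ _ => trivial) a)
end

section
/- Let π: F_n → Γ be a surjective group homomorphism from a free group of rank n onto a group Γ generated by elements g_1,…,g_n with relations R (i.e., ker π is the normal closure of R). Then the kernel-pair subgroup Λ = { (g,h) ∈ F_n × F_n : π(g) = π(h) } is generated by the set (R × {e}) ∪ { (x, x) : x a free generator of F_n }. -/
open scoped ENNReal

theorem mihailova_subgroup_generators {n : ℕ} {Γ : Type} [Group Γ]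
    (π : FreeGroup (Fin n) →* Γ) (hsurj : Function.Surjective π)
    (R : Set (FreeGroup (Fin n)))
    (hker : π.ker = Subgroup.normalClosure R) :
    ∀ p : FreeGroup (Fin n) × FreeGroup (Fin n),
      p ∈ Subgroup.closure
        (((fun r => (r, (1 : FreeGroup (Fin n)))) '' R) ∪
          Set.range (fun i : Fin n => (FreeGroup.of i, FreeGroup.of i)))
      ↔ π p.1 = π p.2 := by
  set S : Set (FreeGroup (Fin n) × FreeGroup (Fin n)) :=
    (((fun r => (r, (1 : FreeGroup (Fin n)))) '' R) ∪
      Set.range (fun i : Fin n => (FreeGroup.of i, FreeGroup.of i))) with hS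
  set K := Subgroup.closure S with hK
  -- diagonal homomorphism
  set D : FreeGroup (Fin n) →* FreeGroup (Fin n) × FreeGroup (Fin n) :=
    FreeGroup.lift (fun i : Fin n => (FreeGroup.of i, FreeGroup.of i)) with hD
  have hDK : ∀ g, D g ∈ K := by
    intro g
    have : (⊤ : Subgroup (FreeGroup (Fin n))) ≤ K.comap D := by
      rw [← FreeGroup.closure_range_of (Fin n)]
      apply Subgroup.closure_le _ |>.mpr
      rintro _ ⟨i, rfl⟩
      simp only [Subgroup.coe_comap, Set.mem_preimage, SetLike.mem_coe, hD, FreeGroup.lift_apply_of]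
      exact Subgroup.subset_closure (Or.inr ⟨i, rfl⟩)
    exact this (Subgroup.mem_top g)
  -- subgroup of x with (x,1) ∈ K
  set T : Subgroup (FreeGroup (Fin n)) := K.comap (MonoidHom.inl _ _) with hT
  have hTnormal : T.Normal := by
    constructor
    intro x hx g
    have : ((g * x * g⁻¹, 1) : FreeGroup (Fin n) × FreeGroup (Fin n))
        = (g, g) * (x, 1) * (g, g)⁻¹ := by
      simp [mul_assoc]
    show ((g * x * g⁻¹, 1) : FreeGroup (Fin n) × FreeGroup (Fin n)) ∈ K
    rw [this]
    have hg : ((g, g) : FreeGroup (Fin n) × FreeGroup (Fin n)) ∈ K := by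
      have := hDK g
      have hDg : D g = (g, g) := by
        have h1 : (MonoidHom.fst _ _).comp D = MonoidHom.id _ := by
          apply FreeGroup.ext_hom; intro i; simp [hD]
        have h2 : (MonoidHom.snd _ _).comp D = MonoidHom.id _ := by
          apply FreeGroup.ext_hom; intro i; simp [hD]
        have e1 : (D g).1 = g := congrArg (fun f => f g) (congrArg DFunLike.coe h1)
        have e2 : (D g).2 = g := congrArg (fun f => f g) (congrArg DFunLike.coe h2)
        exact Prod.ext e1 e2
      rwa [hDg] at this
    exact mul_mem (mul_mem hg hx) (inv_mem hg)
  have hRT : Subgroup.normalClosure R ≤ T := by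
    apply Subgroup.normalClosure_le_normal
    intro r hr
    exact Subgroup.subset_closure (Or.inl ⟨r, hr, rfl⟩)
  intro p
  constructor
  · intro hp
    refine Subgroup.closure_induction ?_ ?_ ?_ ?_ hp
    · rintro x (⟨r, hr, rfl⟩ | ⟨i, rfl⟩)
      · have : r ∈ π.ker := by rw [hker]; exact Subgroup.subset_normalClosure hr
        simpa using this
      · rfl
    · rfl
    · intro a b _ _ ha hb; simp [ha, hb]
    · intro a _ ha; simp [ha]
  · intro hp
    obtain ⟨g, h⟩ := p
    simp only at hp
    have hk : g * h⁻¹ ∈ π.ker := by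
      simp [MonoidHom.mem_ker, hp]
    have h1 : ((g * h⁻¹, 1) : FreeGroup (Fin n) × FreeGroup (Fin n)) ∈ K :=
      hRT (hker ▸ hk)
    have h2 : ((h, h) : FreeGroup (Fin n) × FreeGroup (Fin n)) ∈ K := by
      have := hDK h
      have hDg : D h = (h, h) := by
        have h1' : (MonoidHom.fst _ _).comp D = MonoidHom.id _ := by
          apply FreeGroup.ext_hom; intro i; simp [hD]
        have h2' : (MonoidHom.snd _ _).comp D = MonoidHom.id _ := by
          apply FreeGroup.ext_hom; intro i; simp [hD]
        exact Prod.ext (congrArg (fun f => f h) (congrArg DFunLike.coe h1'))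
          (congrArg (fun f => f h) (congrArg DFunLike.coe h2'))
      rwa [hDg] at this
    have := mul_mem h1 h2
    simpa [mul_assoc] using this
end
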